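/- For any T-term P and *-term Q, the unique T-*-decomposition of se(P ∧❛ Q) is (se(P)[T↦△], se(Q)). -/

import Mathlib

/-!
Since `se P` has no `F`-leaf, `se (P ∧❛ Q) = se(P)[T↦se(Q)]`. The tree `se Q` of a *-term has both
leaves and is indecomposable: for an ℓ-term its two subtrees share no kind of leaf, and for `∧❛`/`∨❛`
a pure decomposition of `X[T↦Y, F↦Z]` descends to one of `X`, because `X ↦ X[T↦Y, F↦Z]` is injective
as soon as `Y` and `Z` differ in their kinds of leaves (a depth argument). The same descent turns any
ctsd `(Y', Z')` of `se (P ∧❛ Q)` into `se P = Y'[△↦V]` and `Z' = V[T↦se Q]`, and indecomposability of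
`Z'` forces `V = T`. So the ctsd is unique, hence it is the tsd.
-/

/-- Evaluation trees over a set `A` of atoms, with leaves `T` and `F`. -/
inductive ETree (A : Type) : Type
  | leafT : ETree A
  | leafF : ETree A
  | node : ETree A → A → ETree A → ETree A

namespace ETree

/-- Leaf replacement `X[T↦Y, F↦Z]`. -/
def repl {A : Type} : ETree A → ETree A → ETree A → ETree A
  | leafT, y, _ => y
  | leafF, _, z => z
  | node l a r, y, z => node (repl l y z) a (repl r y z)

end ETree

namespace ETree

/-- The tree contains the leaf `T`. -/
def hasT {A : Type} : ETree A → Prop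
  | leafT => True
  | leafF => False
  | node l _ r => hasT l ∨ hasT r

/-- The tree contains the leaf `F`. -/
def hasF {A : Type} : ETree A → Prop
  | leafT => False
  | leafF => True
  | node l _ r => hasF l ∨ hasF r

end ETree

namespace ETree

/-- Depth of an evaluation tree. -/
def depth {A : Type} : ETree A → ℕ
  | leafT => 0
  | leafF => 0
  | node l _ r => 1 + max (depth l) (depth r)

end ETree

/-- Closed sequential propositional statements over `A`:
`P ::= a | T | F | ¬P | P ∧❛ P | P ∨❛ P`. -/
inductive STerm (A : Type) : Type
  | atom : A → STerm A
  | tt : STerm A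
  | ff : STerm A
  | neg : STerm A → STerm A
  | and : STerm A → STerm A → STerm A
  | or : STerm A → STerm A → STerm A

/-- The short-circuit evaluation function `se : S_A → T_A`. -/
def se {A : Type} : STerm A → ETree A
  | .tt => .leafT
  | .ff => .leafF
  | .atom a => .node .leafT a .leafF
  | .neg P => (se P).repl .leafF .leafT
  | .and P Q => (se P).repl (se Q) .leafF
  | .or P Q => (se P).repl .leafT (se Q)

/-- T-terms: `P^T ::= T | (a ∧❛ P^T) ∨❛ P^T`. -/
inductive IsTTerm {A : Type} : STerm A → Prop
  | tt : IsTTerm .tt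
  | node (a : A) {P Q} : IsTTerm P → IsTTerm Q → IsTTerm (.or (.and (.atom a) P) Q)

/-- F-terms: `P^F ::= F | (a ∨❛ P^F) ∧❛ P^F`. -/
inductive IsFTerm {A : Type} : STerm A → Prop
  | ff : IsFTerm .ff
  | node (a : A) {P Q} : IsFTerm P → IsFTerm Q → IsFTerm (.and (.or (.atom a) P) Q)

/-- ℓ-terms: `P^ℓ ::= (a ∧❛ P^T) ∨❛ P^F | (¬a ∧❛ P^T) ∨❛ P^F`. -/
inductive IsLTerm {A : Type} : STerm A → Prop
  | pos (a : A) {P Q} : IsTTerm P → IsFTerm Q → IsLTerm (.or (.and (.atom a) P) Q)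
  | neg (a : A) {P Q} : IsTTerm P → IsFTerm Q → IsLTerm (.or (.and (.neg (.atom a)) P) Q)

mutual
/-- The category `P^c ::= P^ℓ | P^* ∧❛ P^d`. -/
inductive IsCTerm {A : Type} : STerm A → Prop
  | ell {P} : IsLTerm P → IsCTerm P
  | and {P Q} : IsStarTerm P → IsDTerm Q → IsCTerm (.and P Q)

/-- The category `P^d ::= P^ℓ | P^* ∨❛ P^c`. -/
inductive IsDTerm {A : Type} : STerm A → Prop
  | ell {P} : IsLTerm P → IsDTerm P
  | or {P Q} : IsStarTerm P → IsCTerm Q → IsDTerm (.or P Q)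

/-- *-terms: `P^* ::= P^c | P^d`. -/
inductive IsStarTerm {A : Type} : STerm A → Prop
  | c {P} : IsCTerm P → IsStarTerm P
  | d {P} : IsDTerm P → IsStarTerm P
end

/-- Binary trees over `A` with leaves in `{T, F, △}`. -/
inductive DTree (A : Type) : Type
  | leafT : DTree A
  | leafF : DTree A
  | leafD : DTree A
  | node : DTree A → A → DTree A → DTree A

namespace DTree

/-- `X[△↦Z]`: replace every `△`-leaf of `X` by the evaluation tree `Z`. -/
def substD {A : Type} : DTree A → ETree A → ETree A
  | leafT, _ => .leafT
  | leafF, _ => .leafF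
  | leafD, z => z
  | node l a r, z => .node (substD l z) a (substD r z)

/-- The tree contains the leaf `T`. -/
def hasT {A : Type} : DTree A → Prop
  | leafT => True
  | leafF => False
  | leafD => False
  | node l _ r => hasT l ∨ hasT r

/-- The tree contains the leaf `F`. -/
def hasF {A : Type} : DTree A → Prop
  | leafT => False
  | leafF => True
  | leafD => False
  | node l _ r => hasF l ∨ hasF r

/-- The tree contains the leaf `△`. -/
def hasD {A : Type} : DTree A → Prop
  | leafT => False
  | leafF => False
  | leafD => True
  | node l _ r => hasD l ∨ hasD r

end DTree

namespace ETree

/-- `X[T↦△]`: replace every `T`-leaf by `△`. -/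
def replTD {A : Type} : ETree A → DTree A
  | leafT => .leafD
  | leafF => .leafF
  | node l a r => .node (replTD l) a (replTD r)

/-- `X[F↦△]`: replace every `F`-leaf by `△`. -/
def replFD {A : Type} : ETree A → DTree A
  | leafT => .leafT
  | leafF => .leafD
  | node l a r => .node (replFD l) a (replFD r)

end ETree

/-- `(Y, Z)` is a candidate T-*-decomposition (ctsd) of `X`. -/
def IsCTSD {A : Type} (Y : DTree A) (Z : ETree A) (X : ETree A) : Prop :=
  X = Y.substD Z ∧ ¬ Y.hasT ∧ ¬ Y.hasF ∧ Z.hasT ∧ Z.hasF ∧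
    ¬ ∃ (U : DTree A) (V : ETree A),
        Z = U.substD V ∧ U.hasD ∧ U ≠ DTree.leafD ∧ ¬ U.hasT ∧ ¬ U.hasF

/-- `(Y, Z)` is a T-*-decomposition (tsd) of `X`: a ctsd such that no ctsd has a
second component of smaller depth. -/
def IsTSD {A : Type} (Y : DTree A) (Z : ETree A) (X : ETree A) : Prop :=
  IsCTSD Y Z X ∧ ∀ (Y' : DTree A) (Z' : ETree A), IsCTSD Y' Z' X → ¬ Z'.depth < Z.depth


namespace DTree

variable {A : Type}

def IsPure (U : DTree A) : Prop := ¬ U.hasT ∧ ¬ U.hasF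

@[simp]
theorem isPure_node {l r : DTree A} {a : A} : (node l a r).IsPure ↔ l.IsPure ∧ r.IsPure := by
  simp only [IsPure, hasT, hasF, not_or]
  tauto

theorem not_isPure_leafT : ¬ (leafT : DTree A).IsPure := fun h => h.1 trivial

theorem not_isPure_leafF : ¬ (leafF : DTree A).IsPure := fun h => h.2 trivial

theorem IsPure.hasD {U : DTree A} (hU : U.IsPure) : U.hasD := by
  induction U with
  | leafT => exact absurd hU not_isPure_leafT
  | leafF => exact absurd hU not_isPure_leafF
  | leafD => trivial
  | node l _ _ ihl _ => exact Or.inl (ihl (isPure_node.1 hU).1)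

theorem hasT_substD (U : DTree A) (V : ETree A) :
    (U.substD V).hasT ↔ U.hasT ∨ U.hasD ∧ V.hasT := by
  induction U with
  | leafT | leafF | leafD => simp [substD, hasT, hasD, ETree.hasT]
  | node l a r ihl ihr =>
    simp only [substD, hasT, hasD, ETree.hasT, ihl, ihr]
    tauto

theorem hasF_substD (U : DTree A) (V : ETree A) :
    (U.substD V).hasF ↔ U.hasF ∨ U.hasD ∧ V.hasF := by
  induction U with
  | leafT | leafF | leafD => simp [substD, hasF, hasD, ETree.hasF]
  | node l a r ihl ihr =>
    simp only [substD, hasF, hasD, ETree.hasF, ihl, ihr]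
    tauto

theorem IsPure.hasT_substD {U : DTree A} (hU : U.IsPure) (V : ETree A) :
    (U.substD V).hasT ↔ V.hasT := by
  simp [DTree.hasT_substD, hU.1, hU.hasD]

theorem IsPure.hasF_substD {U : DTree A} (hU : U.IsPure) (V : ETree A) :
    (U.substD V).hasF ↔ V.hasF := by
  simp [DTree.hasF_substD, hU.2, hU.hasD]

end DTree

namespace ETree

variable {A : Type}

theorem hasT_or_hasF (X : ETree A) : X.hasT ∨ X.hasF := by
  induction X with
  | leafT => exact Or.inl trivial
  | leafF => exact Or.inr trivial
  | node _ _ _ ihl _ => exact ihl.imp Or.inl Or.inl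

theorem hasT_repl (X Y Z : ETree A) :
    (X.repl Y Z).hasT ↔ X.hasT ∧ Y.hasT ∨ X.hasF ∧ Z.hasT := by
  induction X with
  | leafT | leafF => simp [repl, hasT, hasF]
  | node l a r ihl ihr =>
    simp only [repl, hasT, hasF, ihl, ihr]
    tauto

theorem hasF_repl (X Y Z : ETree A) :
    (X.repl Y Z).hasF ↔ X.hasT ∧ Y.hasF ∨ X.hasF ∧ Z.hasF := by
  induction X with
  | leafT | leafF => simp [repl, hasT, hasF]
  | node l a r ihl ihr =>
    simp only [repl, hasT, hasF, ihl, ihr]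
    tauto

theorem repl_leafT_of_not_hasF {X : ETree A} (hX : ¬ X.hasF) (Z : ETree A) :
    X.repl leafT Z = X := by
  induction X with
  | leafT => rfl
  | leafF => exact absurd trivial hX
  | node l a r ihl ihr =>
    simp only [hasF, not_or] at hX
    simp only [repl, ihl hX.1, ihr hX.2]

theorem repl_leafF_of_not_hasT {X : ETree A} (hX : ¬ X.hasT) (Y : ETree A) :
    X.repl Y leafF = X := by
  induction X with
  | leafT => exact absurd trivial hX
  | leafF => rfl
  | node l a r ihl ihr =>
    simp only [hasT, not_or] at hX
    simp only [repl, ihl hX.1, ihr hX.2]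

theorem depth_le_repl_of_hasT {X : ETree A} (hX : X.hasT) (Y Z : ETree A) :
    Y.depth ≤ (X.repl Y Z).depth := by
  induction X with
  | leafT => exact le_rfl
  | leafF => exact absurd hX id
  | node l a r ihl ihr =>
    simp only [repl, depth]
    rcases hX with h | h
    · have := ihl h; omega
    · have := ihr h; omega

def swap : ETree A → ETree A
  | leafT => leafF
  | leafF => leafT
  | node l a r => node (swap l) a (swap r)

theorem swap_repl (X Y Z : ETree A) : X.swap.repl Y Z = X.repl Z Y := by
  induction X with
  | leafT | leafF => rfl
  | node l a r ihl ihr => simp only [swap, repl, ihl, ihr]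

section Injective

variable {Y Z : ETree A}

def LeafKindsDiffer (Y Z : ETree A) : Prop := ¬ ((Y.hasT ↔ Z.hasT) ∧ (Y.hasF ↔ Z.hasF))

theorem LeafKindsDiffer.symm (h : LeafKindsDiffer Y Z) : LeafKindsDiffer Z Y :=
  fun ⟨hT, hF⟩ => h ⟨hT.symm, hF.symm⟩

theorem LeafKindsDiffer.ne (h : LeafKindsDiffer Y Z) : Y ≠ Z := by
  rintro rfl
  exact h ⟨Iff.rfl, Iff.rfl⟩

/-- By depth, `l` and `r` have no `T`-leaves, so both sides have the leaf kinds of `Z`. -/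
theorem LeafKindsDiffer.ne_node_repl (h : LeafKindsDiffer Y Z) (l r : ETree A) (a : A) :
    Y ≠ node (l.repl Y Z) a (r.repl Y Z) := by
  intro hY
  have hdepth := congrArg depth hY
  simp only [depth] at hdepth
  have hl : ¬ l.hasT := fun hl => by have := depth_le_repl_of_hasT hl Y Z; omega
  have hr : ¬ r.hasT := fun hr => by have := depth_le_repl_of_hasT hr Y Z; omega
  have hlF := l.hasT_or_hasF.resolve_left hl
  have hrF := r.hasT_or_hasF.resolve_left hr
  apply h
  rw [hY]
  simp only [hasT, hasF, hasT_repl, hasF_repl, hl, hr, hlF, hrF]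
  tauto

theorem repl_injective (h : LeafKindsDiffer Y Z) : Function.Injective fun X : ETree A => X.repl Y Z := by
  have hZ (l r : ETree A) (a : A) : Z ≠ node (l.repl Y Z) a (r.repl Y Z) := by
    simpa only [swap_repl] using h.symm.ne_node_repl l.swap r.swap a
  intro X X' hX
  induction X generalizing X' with
  | leafT =>
    cases X' with
    | leafT => rfl
    | leafF => exact absurd hX h.ne
    | node l a r => exact absurd hX (h.ne_node_repl l r a)
  | leafF =>
    cases X' with
    | leafT => exact absurd hX.symm h.ne
    | leafF => rfl
    | node l a r => exact absurd hX (hZ l r a)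
  | node l a r ihl ihr =>
    cases X' with
    | leafT => exact absurd hX.symm (h.ne_node_repl l r a)
    | leafF => exact absurd hX.symm (hZ l r a)
    | node l' a' r' =>
      injection hX with hl ha hr
      rw [ihl hl, ha, ihr hr]

end Injective

end ETree

namespace ETree

variable {A : Type}

/-- The last condition of a ctsd on its second component. -/
def IsIndecomposable (Z : ETree A) : Prop :=
  ∀ (U : DTree A) (V : ETree A), U.IsPure → Z = U.substD V → U = .leafD

theorem isIndecomposable_leafT : (leafT : ETree A).IsIndecomposable := by
  rintro (_ | _ | _ | _) V hU h <;> first | rfl | exact absurd hU DTree.not_isPure_leafT | cases h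

theorem isIndecomposable_leafF : (leafF : ETree A).IsIndecomposable := by
  rintro (_ | _ | _ | _) V hU h <;> first | rfl | exact absurd hU DTree.not_isPure_leafF | cases h

/-- A pure decomposition of `node L a R` would put the same tree `V` inside both `L` and `R`. -/
theorem isIndecomposable_node {L R : ETree A} (a : A) (hT : ¬ (L.hasT ∧ R.hasT))
    (hF : ¬ (L.hasF ∧ R.hasF)) : (node L a R).IsIndecomposable := by
  rintro (_ | _ | _ | ⟨u, b, u'⟩) V hU h
  · exact absurd hU DTree.not_isPure_leafT
  · exact absurd hU DTree.not_isPure_leafF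
  · rfl
  · obtain ⟨hu, hu'⟩ := DTree.isPure_node.1 hU
    injection h with hL _ hR
    subst hL hR
    rcases V.hasT_or_hasF with hV | hV
    · exact absurd ⟨(hu.hasT_substD V).2 hV, (hu'.hasT_substD V).2 hV⟩ hT
    · exact absurd ⟨(hu.hasF_substD V).2 hV, (hu'.hasF_substD V).2 hV⟩ hF

section Factor

variable {Y Z : ETree A}

/-- The pieces found in the two subtrees agree by `repl_injective`. -/
theorem exists_eq_substD_of_repl_eq_substD (hY : Y.IsIndecomposable)
    (hZ : Z.IsIndecomposable) (hYZ : LeafKindsDiffer Y Z) {U : DTree A} (hU : U.IsPure)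
    {X V : ETree A} (h : X.repl Y Z = U.substD V) :
    ∃ V', X = U.substD V' ∧ V'.repl Y Z = V := by
  induction U generalizing X with
  | leafT => exact absurd hU DTree.not_isPure_leafT
  | leafF => exact absurd hU DTree.not_isPure_leafF
  | leafD => exact ⟨X, rfl, h⟩
  | node l a r ihl ihr =>
    obtain ⟨hl, hr⟩ := DTree.isPure_node.1 hU
    cases X with
    | leafT => exact absurd (hY _ V hU h) nofun
    | leafF => exact absurd (hZ _ V hU h) nofun
    | node Xl b Xr =>
      injection h with hXl hab hXr
      obtain ⟨V₁, rfl, hV₁⟩ := ihl hl hXl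
      obtain ⟨V₂, rfl, hV₂⟩ := ihr hr hXr
      obtain rfl : V₁ = V₂ := repl_injective hYZ (hV₁.trans hV₂.symm)
      exact ⟨V₁, by rw [hab]; rfl, hV₁⟩

theorem IsIndecomposable.repl {X : ETree A} (hX : X.IsIndecomposable)
    (hY : Y.IsIndecomposable) (hZ : Z.IsIndecomposable) (hYZ : LeafKindsDiffer Y Z) :
    (X.repl Y Z).IsIndecomposable := fun U _ hU h =>
  let ⟨V', hXV', _⟩ := exists_eq_substD_of_repl_eq_substD hY hZ hYZ hU h
  hX U V' hU hXV'

end Factor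

/-- The conditions a ctsd puts on its second component. -/
def IsAdmissible (Z : ETree A) : Prop := Z.hasT ∧ Z.hasF ∧ Z.IsIndecomposable

theorem IsAdmissible.repl_leafF {X Y : ETree A} (hX : X.IsAdmissible) (hY : Y.IsAdmissible) :
    (X.repl Y leafF).IsAdmissible :=
  ⟨(hasT_repl _ _ _).2 (Or.inl ⟨hX.1, hY.1⟩), (hasF_repl _ _ _).2 (Or.inr ⟨hX.2.1, trivial⟩),
    hX.2.2.repl hY.2.2 isIndecomposable_leafF fun h => h.1.1 hY.1⟩

theorem IsAdmissible.repl_leafT {X Z : ETree A} (hX : X.IsAdmissible) (hZ : Z.IsAdmissible) :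
    (X.repl leafT Z).IsAdmissible :=
  ⟨(hasT_repl _ _ _).2 (Or.inl ⟨hX.1, trivial⟩), (hasF_repl _ _ _).2 (Or.inr ⟨hX.2.1, hZ.2.1⟩),
    hX.2.2.repl isIndecomposable_leafT hZ.2.2 fun h => h.2.2 hZ.2.1⟩

theorem not_hasT_replTD (X : ETree A) : ¬ X.replTD.hasT := by
  induction X with
  | leafT | leafF => exact id
  | node l a r ihl ihr => exact fun h => h.elim ihl ihr

theorem hasF_replTD (X : ETree A) : X.replTD.hasF ↔ X.hasF := by
  induction X with
  | leafT | leafF => rfl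
  | node l a r ihl ihr => exact or_congr ihl ihr

theorem isPure_replTD {X : ETree A} (hX : ¬ X.hasF) : X.replTD.IsPure :=
  ⟨X.not_hasT_replTD, (hasF_replTD X).not.2 hX⟩

theorem replTD_eq_leafD_iff {X : ETree A} : X.replTD = .leafD ↔ X = leafT := by
  cases X <;> simp [replTD]

theorem substD_replTD (X Z : ETree A) : X.replTD.substD Z = X.repl Z leafF := by
  induction X with
  | leafT | leafF => rfl
  | node l a r ihl ihr => simp only [replTD, DTree.substD, repl, ihl, ihr]

theorem replTD_substD_leafT {U : DTree A} (hU : ¬ U.hasT) : (U.substD leafT).replTD = U := by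
  induction U with
  | leafT => exact absurd trivial hU
  | leafF | leafD => rfl
  | node l a r ihl ihr =>
    simp only [DTree.hasT, not_or] at hU
    simp only [DTree.substD, replTD, ihl hU.1, ihr hU.2]

end ETree

section Decomposition

variable {A : Type}

theorem isCTSD_iff {Y : DTree A} {Z X : ETree A} :
    IsCTSD Y Z X ↔ X = Y.substD Z ∧ Y.IsPure ∧ Z.IsAdmissible := by
  have hZ : (¬ ∃ (U : DTree A) (V : ETree A),
      Z = U.substD V ∧ U.hasD ∧ U ≠ .leafD ∧ ¬ U.hasT ∧ ¬ U.hasF) ↔ Z.IsIndecomposable :=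
    ⟨fun h U V hU hZ => by_contra fun hne => h ⟨U, V, hZ, hU.hasD, hne, hU⟩,
      fun h ⟨U, V, hZ, _, hne, hT, hF⟩ => hne (h U V ⟨hT, hF⟩ hZ)⟩
  simp only [IsCTSD, ETree.IsAdmissible, DTree.IsPure, hZ, and_assoc]

theorem isTSD_iff_of_isCTSD_iff {X Z₀ : ETree A} {Y₀ : DTree A}
    (h : ∀ Y Z, IsCTSD Y Z X ↔ Y = Y₀ ∧ Z = Z₀) (Y : DTree A) (Z : ETree A) :
    IsTSD Y Z X ↔ Y = Y₀ ∧ Z = Z₀ := by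
  refine ⟨fun hYZ => (h Y Z).1 hYZ.1, ?_⟩
  rintro ⟨rfl, rfl⟩
  refine ⟨(h _ _).2 ⟨rfl, rfl⟩, fun Y' Z' hYZ' => ?_⟩
  rw [((h Y' Z').1 hYZ').2]
  exact lt_irrefl _

/-- Factoring `W[T↦Z]` through `Y[△↦Z']` writes `W = Y[△↦V]` and `Z' = V[T↦Z]`; indecomposability
of `Z'` then forces `V = T`. -/
theorem eq_of_repl_leafF_eq_substD {W Z Z' : ETree A} {Y : DTree A} (hW : ¬ W.hasF)
    (hZ : Z.IsAdmissible) (hY : Y.IsPure) (hZ' : Z'.IsIndecomposable)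
    (h : W.repl Z .leafF = Y.substD Z') : Y = W.replTD ∧ Z' = Z := by
  obtain ⟨V, rfl, rfl⟩ := ETree.exists_eq_substD_of_repl_eq_substD hZ.2.2
    ETree.isIndecomposable_leafF (fun h => h.1.1 hZ.1) hY h
  have hV : ¬ V.hasF := fun hV => hW ((hY.hasF_substD V).2 hV)
  have hVT : V = .leafT := ETree.replTD_eq_leafD_iff.1
    (hZ' _ Z (ETree.isPure_replTD hV) (ETree.substD_replTD V Z).symm)
  subst hVT
  exact ⟨(ETree.replTD_substD_leafT hY.1).symm, rfl⟩

theorem isCTSD_repl_leafF_iff {W Z : ETree A} (hW : ¬ W.hasF) (hZ : Z.IsAdmissible)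
    (Y : DTree A) (Z' : ETree A) :
    IsCTSD Y Z' (W.repl Z .leafF) ↔ Y = W.replTD ∧ Z' = Z := by
  rw [isCTSD_iff]
  constructor
  · rintro ⟨h, hY, hZ'⟩
    exact eq_of_repl_leafF_eq_substD hW hZ hY hZ'.2.2 h
  · rintro ⟨rfl, rfl⟩
    exact ⟨(ETree.substD_replTD W Z').symm, ETree.isPure_replTD hW, hZ⟩

end Decomposition

section Terms

variable {A : Type}

theorem se_or_and_atom (a : A) (P Q : STerm A) :
    se (.or (.and (.atom a) P) Q) = .node ((se P).repl .leafT (se Q)) a (se Q) := rfl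

theorem se_or_and_neg_atom (a : A) (P Q : STerm A) :
    se (.or (.and (.neg (.atom a)) P) Q) = .node (se Q) a ((se P).repl .leafT (se Q)) := rfl

theorem se_and_or_atom (a : A) (P Q : STerm A) :
    se (.and (.or (.atom a) P) Q) = .node (se Q) a ((se P).repl (se Q) .leafF) := rfl

theorem IsTTerm.not_hasF_se {P : STerm A} (hP : IsTTerm P) : ¬ (se P).hasF := by
  induction hP with
  | tt => exact id
  | node a _ _ ihP ihQ =>
    rw [se_or_and_atom, ETree.repl_leafT_of_not_hasF ihP]
    exact fun h => h.elim ihP ihQ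

theorem IsFTerm.not_hasT_se {P : STerm A} (hP : IsFTerm P) : ¬ (se P).hasT := by
  induction hP with
  | ff => exact id
  | node a _ _ ihP ihQ =>
    rw [se_and_or_atom, ETree.repl_leafF_of_not_hasT ihP]
    exact fun h => h.elim ihQ ihP

theorem IsLTerm.isAdmissible_se {P : STerm A} (hP : IsLTerm P) : (se P).IsAdmissible := by
  rcases hP with ⟨a, hT, hF⟩ | ⟨a, hT, hF⟩
  all_goals
    have hTF := hT.not_hasF_se
    have hFT := hF.not_hasT_se
    have hTT := (ETree.hasT_or_hasF _).resolve_right hTF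
    have hFF := (ETree.hasT_or_hasF _).resolve_left hFT
  · rw [se_or_and_atom, ETree.repl_leafT_of_not_hasF hTF]
    exact ⟨Or.inl hTT, Or.inr hFF, ETree.isIndecomposable_node a (fun h => hFT h.2)
      fun h => hTF h.1⟩
  · rw [se_or_and_neg_atom, ETree.repl_leafT_of_not_hasF hTF]
    exact ⟨Or.inr hTT, Or.inl hFF, ETree.isIndecomposable_node a (fun h => hFT h.1)
      fun h => hTF h.2⟩

theorem IsStarTerm.isAdmissible_se : ∀ {Q : STerm A}, IsStarTerm Q → (se Q).IsAdmissible
  | .and Q₁ Q₂, h => by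
    rcases h with ⟨⟨⟨⟩⟩ | ⟨h₁, h₂⟩⟩ | ⟨⟨⟨⟩⟩⟩
    exact (isAdmissible_se h₁).repl_leafF (isAdmissible_se (.d h₂))
  | .or Q₁ Q₂, h => by
    rcases h with ⟨⟨hℓ⟩⟩ | ⟨⟨hℓ⟩ | ⟨h₁, h₂⟩⟩
    · exact hℓ.isAdmissible_se
    · exact hℓ.isAdmissible_se
    · exact (isAdmissible_se h₁).repl_leafT (isAdmissible_se (.c h₂))
  | .atom _, h | .tt, h | .ff, h | .neg _, h => by rcases h with ⟨⟨⟨⟩⟩⟩ | ⟨⟨⟨⟩⟩⟩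

end Terms

/-- For a T-term `P` and a *-term `Q`, the unique tsd of `se(P ∧❛ Q)` is
`(se(P)[T↦△], se(Q))`. -/
theorem tsd_unique {A : Type} [Nonempty A] (P Q : STerm A)
    (hP : IsTTerm P) (hQ : IsStarTerm Q) :
    ∀ (Y : DTree A) (Z : ETree A),
      IsTSD Y Z (se (.and P Q)) ↔ Y = (se P).replTD ∧ Z = se Q :=
  isTSD_iff_of_isCTSD_iff (isCTSD_repl_leafF_iff hP.not_hasF_se hQ.isAdmissible_se)
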